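/- Let G = (V, E) be a finite connected undirected simple graph with n = |V| ≥ 2 vertices and m = |E| edges, let Z denote its cycle space, and let b be a natural number with 2^b ≥ n·m². Then the number of b-tuples (φ_1, …, φ_b) of binary circulations for which either (i) some edge e that is not a cut edge satisfies e ∉ φ_i for all i, or (ii) some pair of distinct edges e, f, neither a cut edge, with {e, f} not a cut pair satisfies (e ∈ φ_i ⟺ f ∈ φ_i) for all i, is at most |Z|^b / n. -/

import Mathlib

open scoped Classical symmDiff

noncomputable section

variable {V : Type*}

/-- The induced edge cut `δ(S)`: the edges of `G` with exactly one endpoint in `S`. -/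
def edgeCut [Fintype V] (G : SimpleGraph V) (S : Set V) : Finset (Sym2 V) :=
  G.edgeFinset.filter fun e => ∀ u v : V, e = s(u, v) → (u ∈ S ↔ v ∉ S)

/-- `φ` is a binary circulation of `G`: a set of edges of `G` in which every vertex
has even degree. -/
def IsCirculation [Fintype V] (G : SimpleGraph V) (φ : Finset (Sym2 V)) : Prop :=
  ↑φ ⊆ G.edgeSet ∧ ∀ v : V, Even ((φ.filter fun e => v ∈ e).card)

/-- The characteristic vector of an edge set, as an element of `(ZMod 2)^E`. -/
def chi [Fintype V] (G : SimpleGraph V) (F : Finset (Sym2 V)) : G.edgeSet → ZMod 2 :=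
  fun e => if ↑e ∈ F then 1 else 0

/-- `e` is a cut edge of `G`: removing it disconnects `G`. -/
def IsCutEdge (G : SimpleGraph V) (e : Sym2 V) : Prop :=
  e ∈ G.edgeSet ∧ ¬(G.deleteEdges {e}).Connected

/-- `{e, f}` is a cut pair of `G`: two distinct edges, neither a cut edge, whose
joint removal disconnects `G`. -/
def IsCutPair (G : SimpleGraph V) (e f : Sym2 V) : Prop :=
  e ≠ f ∧ e ∈ G.edgeSet ∧ f ∈ G.edgeSet ∧ ¬IsCutEdge G e ∧ ¬IsCutEdge G f ∧
    ¬(G.deleteEdges {e, f}).Connected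

/-- `v` is a cut vertex of `G`: deleting `v` and its incident edges disconnects `G`. -/
def IsCutVertex (G : SimpleGraph V) (v : V) : Prop :=
  ¬(G.induce {u | u ≠ v}).Connected

/-- `T` is a spanning tree of `G`. -/
def IsSpanningTree (G T : SimpleGraph V) : Prop := T ≤ G ∧ T.IsTree

/-- `K` is a cut class of `G`: an inclusion-maximal set of more than one edge,
every two of which form a cut pair. -/
def IsCutClass (G : SimpleGraph V) (K : Finset (Sym2 V)) : Prop :=
  1 < K.card ∧ (∀ e ∈ K, ∀ f ∈ K, e ≠ f → IsCutPair G e f) ∧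
    ∀ K' : Finset (Sym2 V), K ⊆ K' →
      (1 < K'.card ∧ ∀ e ∈ K', ∀ f ∈ K', e ≠ f → IsCutPair G e f) → K' = K

/-!
A non-cut edge `e` lies on a cycle `C`, and a non-cut-pair `{e, f}` on a cycle `C` avoiding `f`.
Adding `C` (symmetric difference) is an involution of the cycle space that toggles `e` and fixes
`f`, so it maps the circulations missing `e` (resp. treating `e` and `f` alike) injectively onto
the others: each such event has probability at most `1/2` for one circulation, hence at most
`2⁻ᵇ` for a `b`-tuple. A union bound over the at most `m²` events and `n m² ≤ 2ᵇ` conclude.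
-/

open Finset

namespace Finset

lemma even_card_symmDiff {α : Type*} [DecidableEq α] {s t : Finset α}
    (hs : Even #s) (ht : Even #t) : Even #(s ∆ t) := by
  have hsub : s ∩ t ⊆ s ∪ t := inter_subset_left.trans subset_union_left
  have hunion := card_union_add_card_inter s t
  have hinter : #(s ∩ t) ≤ #(s ∪ t) := card_le_card hsub
  rw [symmDiff_eq_sup_sdiff_inf, sup_eq_union, inf_eq_inter, card_sdiff_of_subset hsub]
  rw [Nat.even_iff] at *
  omega

lemma two_mul_card_filter_le_of_involutive {α : Type*} (s : Finset α) (p : α → Prop)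
    [DecidablePred p] {f : α → α} (hf : Function.Involutive f) (hmaps : ∀ x ∈ s, f x ∈ s)
    (hflip : ∀ x ∈ s, p x → ¬p (f x)) :
    2 * #(s.filter p) ≤ #s := by
  classical
  have himage : (s.filter p).image f ⊆ s.filter (¬p ·) := by
    simp only [subset_iff, mem_image, mem_filter]
    rintro _ ⟨x, ⟨hx, hpx⟩, rfl⟩
    exact ⟨hmaps x hx, hflip x hx hpx⟩
  have hle := card_le_card himage
  rw [card_image_of_injective _ hf.injective] at hle
  have := card_filter_add_card_filter_not (s := s) (p := p)
  omega

end Finset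

lemma IsCirculation.symmDiff [Fintype V] {G : SimpleGraph V} {φ ψ : Finset (Sym2 V)}
    (hφ : IsCirculation G φ) (hψ : IsCirculation G ψ) : IsCirculation G (φ ∆ ψ) := by
  refine ⟨fun e he => ?_, fun v => ?_⟩
  · rcases mem_symmDiff.mp he with ⟨he, -⟩ | ⟨he, -⟩
    exacts [hφ.1 he, hψ.1 he]
  · have hfilter : (φ ∆ ψ).filter (v ∈ ·) = φ.filter (v ∈ ·) ∆ ψ.filter (v ∈ ·) := by
      ext e
      simp only [mem_filter, mem_symmDiff]
      tauto
    rw [hfilter]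
    exact even_card_symmDiff (hφ.2 v) (hψ.2 v)

lemma SimpleGraph.Walk.IsTrail.isCirculation_edges [Fintype V] {G : SimpleGraph V} {u : V}
    {c : G.Walk u u} (hc : c.IsTrail) : IsCirculation G c.edges.toFinset := by
  refine ⟨fun e he => c.edges_subset_edgeSet (List.mem_toFinset.mp he), fun x => ?_⟩
  rw [List.filter_toFinset, List.toFinset_card_of_nodup (hc.edges_nodup.filter _),
    ← List.countP_eq_length_filter]
  exact (hc.even_countP_edges_iff x).mpr fun h => absurd rfl h

/-- The cycle through `e` closes a path from one end of `e` to the other in `G - s`. -/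
lemma exists_isCirculation_mem_forall_not_mem [Fintype V] {G : SimpleGraph V}
    {s : Set (Sym2 V)} {e : Sym2 V} (he : e ∈ G.edgeSet) (hes : e ∈ s)
    (hconn : (G.deleteEdges s).Connected) :
    ∃ φ, IsCirculation G φ ∧ e ∈ φ ∧ ∀ f ∈ s, f ≠ e → f ∉ φ := by
  induction e using Sym2.ind with | _ u v =>
  have huv : G.Adj u v := he
  obtain ⟨w⟩ := hconn.preconnected v u
  have hw : ∀ f ∈ w.toPath.1.edges, f ∈ G.edgeSet ∧ f ∉ s := fun f hf => by
    simpa using w.toPath.1.edges_subset_edgeSet hf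
  set q := w.toPath.1.transfer G fun f hf => (hw f hf).1
  have hq : q.edges = w.toPath.1.edges := SimpleGraph.Walk.edges_transfer _ _
  have hc : (SimpleGraph.Walk.cons huv q).IsTrail := by
    rw [SimpleGraph.Walk.isTrail_cons, hq]
    exact ⟨(w.toPath.2.transfer _).isTrail, fun h => (hw _ h).2 hes⟩
  refine ⟨_, hc.isCirculation_edges, by simp, fun f hf hfe hfc => ?_⟩
  rw [List.mem_toFinset, SimpleGraph.Walk.edges_cons, List.mem_cons, hq] at hfc
  exact hfc.elim hfe fun h => (hw f h).2 hf

section Circulations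

variable [Fintype V] (G : SimpleGraph V)

def circulations : Finset (Finset (Sym2 V)) :=
  univ.filter (IsCirculation G)

variable {G}

lemma ncard_setOf_isCirculation : {ψ | IsCirculation G ψ}.ncard = #(circulations G) := by
  simp [circulations, Set.ncard_eq_toFinset_card']

lemma two_mul_card_circulations_filter_le {p : Finset (Sym2 V) → Prop} [DecidablePred p]
    {φ : Finset (Sym2 V)} (hφ : IsCirculation G φ) (hflip : ∀ ψ, p ψ → ¬p (ψ ∆ φ)) :
    2 * #((circulations G).filter p) ≤ #(circulations G) :=
  two_mul_card_filter_le_of_involutive _ p (f := (· ∆ φ)) (symmDiff_symmDiff_cancel_right φ)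
    (fun ψ hψ => by simpa [circulations] using (mem_filter.mp hψ).2.symmDiff hφ)
    fun ψ _ => hflip ψ

lemma two_mul_card_circulations_not_mem_le {e : Sym2 V} (he : e ∈ G.edgeSet)
    (he' : ¬IsCutEdge G e) :
    2 * #((circulations G).filter (e ∉ ·)) ≤ #(circulations G) := by
  have hconn : (G.deleteEdges {e}).Connected := not_not.mp fun h => he' ⟨he, h⟩
  obtain ⟨φ, hφ, heφ, -⟩ :=
    exists_isCirculation_mem_forall_not_mem he (Set.mem_singleton e) hconn
  refine two_mul_card_circulations_filter_le hφ fun ψ heψ => ?_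
  simp [mem_symmDiff, heψ, heφ]

lemma two_mul_card_circulations_mem_iff_le {e f : Sym2 V} (he : e ∈ G.edgeSet)
    (hf : f ∈ G.edgeSet) (hef : e ≠ f) (he' : ¬IsCutEdge G e) (hf' : ¬IsCutEdge G f)
    (hef' : ¬IsCutPair G e f) :
    2 * #((circulations G).filter (fun ψ => e ∈ ψ ↔ f ∈ ψ)) ≤ #(circulations G) := by
  have hconn : (G.deleteEdges {e, f}).Connected :=
    not_not.mp fun h => hef' ⟨hef, he, hf, he', hf', h⟩
  obtain ⟨φ, hφ, heφ, hφs⟩ := exists_isCirculation_mem_forall_not_mem he (by simp) hconn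
  have hfφ : f ∉ φ := hφs f (by simp) hef.symm
  refine two_mul_card_circulations_filter_le hφ fun ψ _ => ?_
  simp only [mem_symmDiff, heφ, hfφ]
  tauto

end Circulations

lemma two_pow_mul_card_biUnion_piFinset_le {α ι : Type*} [DecidableEq α] (K : Finset ι)
    (S : ι → Finset α) {N : ℕ} (hS : ∀ k ∈ K, 2 * #(S k) ≤ N) (b : ℕ) :
    2 ^ b * #(K.biUnion fun k => Fintype.piFinset fun _ : Fin b => S k) ≤ #K * N ^ b :=
  calc 2 ^ b * #(K.biUnion fun k => Fintype.piFinset fun _ : Fin b => S k)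
      ≤ ∑ k ∈ K, 2 ^ b * #(S k) ^ b := by
        rw [← mul_sum]
        gcongr
        exact card_biUnion_le.trans_eq (by simp)
    _ ≤ ∑ _k ∈ K, N ^ b := sum_le_sum fun k hk => by
        rw [← mul_pow]
        exact Nat.pow_le_pow_left (hS k hk) b
    _ = #K * N ^ b := by rw [sum_const, smul_eq_mul]

lemma card_filter_add_card_filter_offDiag_le {α : Type*} [DecidableEq α] (s : Finset α)
    (p : α → Prop) [DecidablePred p] (q : α × α → Prop) [DecidablePred q] :
    #(s.filter p) + #(s.offDiag.filter q) ≤ #s ^ 2 := by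
  have h₁ := card_filter_le s p
  have h₂ := card_filter_le s.offDiag q
  rw [offDiag_card] at h₂
  have : #s ≤ #s * #s := Nat.le_mul_self _
  rw [sq]
  omega

def badTuples [Fintype V] (G : SimpleGraph V) (b : ℕ) : Set (Fin b → Finset (Sym2 V)) :=
  {φ | (∀ i, IsCirculation G (φ i)) ∧
    ((∃ e ∈ G.edgeSet, ¬IsCutEdge G e ∧ ∀ i, e ∉ φ i) ∨
      ∃ e ∈ G.edgeSet, ∃ f ∈ G.edgeSet, e ≠ f ∧
        ¬IsCutEdge G e ∧ ¬IsCutEdge G f ∧ ¬IsCutPair G e f ∧ ∀ i, (e ∈ φ i ↔ f ∈ φ i))}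

lemma two_pow_mul_ncard_badTuples_le [Fintype V] (G : SimpleGraph V) (b : ℕ) :
    2 ^ b * (badTuples G b).ncard ≤ Fintype.card G.edgeSet ^ 2 * #(circulations G) ^ b := by
  set E₁ := G.edgeFinset.filter fun e => ¬IsCutEdge G e
  set E₂ := G.edgeFinset.offDiag.filter fun p =>
    ¬IsCutEdge G p.1 ∧ ¬IsCutEdge G p.2 ∧ ¬IsCutPair G p.1 p.2
  set Z := circulations G
  set U₁ := E₁.biUnion fun e => Fintype.piFinset fun _ : Fin b => Z.filter (e ∉ ·)
  set U₂ := E₂.biUnion fun p => Fintype.piFinset fun _ : Fin b =>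
    Z.filter fun ψ => p.1 ∈ ψ ↔ p.2 ∈ ψ
  have hsub : badTuples G b ⊆ ↑(U₁ ∪ U₂) := by
    rintro φ ⟨hφZ, ⟨e, he, he', hφe⟩ | ⟨e, he, f, hf, hef, he', hf', hef', hφef⟩⟩
    · refine mem_union_left _ (mem_biUnion.mpr ⟨e, ?_, ?_⟩)
      · simp [E₁, he, he']
      · simp [Fintype.mem_piFinset, Z, circulations, hφZ, hφe]
    · refine mem_union_right _ (mem_biUnion.mpr ⟨(e, f), ?_, ?_⟩)
      · simp [E₂, he, hf, hef, he', hf', hef']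
      · simp [Fintype.mem_piFinset, Z, circulations, hφZ, hφef]
  have h₁ : 2 ^ b * #U₁ ≤ #E₁ * #Z ^ b := by
    refine two_pow_mul_card_biUnion_piFinset_le _ _ (fun e he => ?_) b
    simp only [E₁, mem_filter, SimpleGraph.mem_edgeFinset] at he
    exact two_mul_card_circulations_not_mem_le he.1 he.2
  have h₂ : 2 ^ b * #U₂ ≤ #E₂ * #Z ^ b := by
    refine two_pow_mul_card_biUnion_piFinset_le _ _ (fun p hp => ?_) b
    simp only [E₂, mem_filter, mem_offDiag, SimpleGraph.mem_edgeFinset] at hp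
    obtain ⟨⟨he, hf, hef⟩, he', hf', hef'⟩ := hp
    exact two_mul_card_circulations_mem_iff_le he hf hef he' hf' hef'
  have hE : #E₁ + #E₂ ≤ Fintype.card G.edgeSet ^ 2 := by
    rw [← SimpleGraph.edgeFinset_card]
    exact card_filter_add_card_filter_offDiag_le _ _ _
  calc 2 ^ b * (badTuples G b).ncard
      ≤ 2 ^ b * #U₁ + 2 ^ b * #U₂ := by
        rw [← mul_add]
        gcongr
        exact (Set.ncard_le_ncard hsub).trans ((Set.ncard_coe_finset _).trans_le
          (card_union_le _ _))
      _ ≤ (#E₁ + #E₂) * #Z ^ b := by rw [add_mul]; exact add_le_add h₁ h₂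
      _ ≤ Fintype.card G.edgeSet ^ 2 * #Z ^ b := by gcongr

theorem count_bad_tuples_cutPairs_general [Fintype V] (G : SimpleGraph V) (b : ℕ)
    (hb : Fintype.card V * Fintype.card G.edgeSet ^ 2 ≤ 2 ^ b) :
    Fintype.card V *
        Set.ncard {φ : Fin b → Finset (Sym2 V) |
          (∀ i, IsCirculation G (φ i)) ∧
            ((∃ e ∈ G.edgeSet, ¬IsCutEdge G e ∧ ∀ i, e ∉ φ i) ∨
              ∃ e ∈ G.edgeSet, ∃ f ∈ G.edgeSet, e ≠ f ∧
                ¬IsCutEdge G e ∧ ¬IsCutEdge G f ∧ ¬IsCutPair G e f ∧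
                  ∀ i, (e ∈ φ i ↔ f ∈ φ i))}
      ≤ (Set.ncard {ψ : Finset (Sym2 V) | IsCirculation G ψ}) ^ b := by
  change _ * (badTuples G b).ncard ≤ _
  rw [ncard_setOf_isCirculation]
  refine Nat.le_of_mul_le_mul_left ?_ (pow_pos two_pos b)
  calc 2 ^ b * (Fintype.card V * (badTuples G b).ncard)
      = Fintype.card V * (2 ^ b * (badTuples G b).ncard) := mul_left_comm _ _ _
    _ ≤ Fintype.card V * (Fintype.card G.edgeSet ^ 2 * #(circulations G) ^ b) :=
        Nat.mul_le_mul_left _ (two_pow_mul_ncard_badTuples_le G b)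
    _ ≤ 2 ^ b * #(circulations G) ^ b := by
        rw [← mul_assoc]
        gcongr

/-- Let `G` have `n ≥ 2` vertices and `m` edges, and let `2^b ≥ n·m²`.
Then the number of `b`-tuples of binary circulations for which either (i) some non-cut
edge avoids every `φ_i`, or (ii) some pair of distinct non-cut edges `e, f` that is not
a cut pair satisfies `e ∈ φ_i ↔ f ∈ φ_i` for all `i`, is at most `|Z|^b / n` (stated in
the equivalent product form `n · #bad ≤ |Z|^b`). -/
theorem count_bad_tuples_cutPairs [Fintype V] (G : SimpleGraph V) (hG : G.Connected)
    (hn : 2 ≤ Fintype.card V) (b : ℕ)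
    (hb : Fintype.card V * Fintype.card G.edgeSet ^ 2 ≤ 2 ^ b) :
    Fintype.card V *
        Set.ncard {φ : Fin b → Finset (Sym2 V) |
          (∀ i, IsCirculation G (φ i)) ∧
            ((∃ e ∈ G.edgeSet, ¬IsCutEdge G e ∧ ∀ i, e ∉ φ i) ∨
              ∃ e ∈ G.edgeSet, ∃ f ∈ G.edgeSet, e ≠ f ∧
                ¬IsCutEdge G e ∧ ¬IsCutEdge G f ∧ ¬IsCutPair G e f ∧
                  ∀ i, (e ∈ φ i ↔ f ∈ φ i))}
      ≤ (Set.ncard {ψ : Finset (Sym2 V) | IsCirculation G ψ}) ^ b :=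
  count_bad_tuples_cutPairs_general G b hb
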